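/- arXiv:2201.11020 — 2 statements merged into one kernel-verified Lean document; each statement's English description precedes it below -/
import Mathlib

section
/- There exists a unique trace-free 2×2 matrix W(ξ,ν) = [[X(ξ,ν), Y(ξ,ν)],[Z(ξ,ν), −X(ξ,ν)]] with entries in ξ⁻¹ν⁻¹·𝒜[ε,ε⁻¹][[ξ⁻¹,ν⁻¹]] satisfying the two equations: ε∂(W(ξ,ν)) + [U(ξ), W(ξ,ν)] + [∇(ν)(U(ξ)), R(ξ)] = 0, where ∇(ν)(U(ξ)) = [[0, −∇(ν)(q)],[∇(ν)(r), 0]]; and 2X(ξ,ν) + 2a(ξ)X(ξ,ν) + c(ξ)Y(ξ,ν) + b(ξ)Z(ξ,ν) = 0. Moreover this unique W equals ∇(ν)(R(ξ)). -/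
set_option synthInstance.maxHeartbeats 1000000
set_option maxHeartbeats 1000000

noncomputable section

open scoped BigOperators

/-- Index set of the generators `qᵢ, rᵢ` of 𝒜. -/
inductive NLSVar : Type
  | q : ℕ → NLSVar
  | r : ℕ → NLSVar

/-- 𝒜 = ℂ[q₀, r₀, q₁, r₁, …]. -/
abbrev NLSA : Type := MvPolynomial NLSVar ℂ

/-- 𝒜[ε, ε⁻¹], as Laurent polynomials in ε over 𝒜. -/
abbrev NLSE : Type := LaurentPolynomial NLSA

instance : CommRing NLSE := inferInstance
instance : Algebra ℂ NLSE := inferInstance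

/-- The generator qᵢ viewed in 𝒜[ε,ε⁻¹]. -/
def qv (i : ℕ) : NLSE := LaurentPolynomial.C (MvPolynomial.X (NLSVar.q i))

/-- The generator rᵢ viewed in 𝒜[ε,ε⁻¹]. -/
def rv (i : ℕ) : NLSE := LaurentPolynomial.C (MvPolynomial.X (NLSVar.r i))

/-- ε ∈ 𝒜[ε,ε⁻¹]. -/
def eps : NLSE := LaurentPolynomial.T 1

/-- ε⁻¹ ∈ 𝒜[ε,ε⁻¹]. -/
def epsInv : NLSE := LaurentPolynomial.T (-1)

/-- Membership in the subring 𝒜[ε] ⊆ 𝒜[ε,ε⁻¹]: no negative powers of ε. -/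
def inAE (x : NLSE) : Prop := ∀ n : ℤ, n < 0 → (show ℤ →₀ NLSA from AddMonoidAlgebra.coeff x) n = 0

/-- The Laurent-series ring 𝒜[ε,ε⁻¹][[ξ⁻¹]][ξ]; the Hahn-series exponent `n`
records the power of ξ⁻¹. -/
abbrev NLSL : Type := LaurentSeries NLSE

instance : CommRing NLSL := inferInstance
instance : Algebra ℂ NLSL := inferInstance

/-- ξ as a Laurent series in ξ⁻¹. -/
def xiL : NLSL := HahnSeries.single (-1 : ℤ) 1

/-- Apply a zero-preserving map to all coefficients of a Laurent series. -/
def coeffMap {R S : Type*} [Zero R] [Zero S] (f : ZeroHom R S)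
    (x : HahnSeries ℤ R) : HahnSeries ℤ S where
  coeff n := f (x.coeff n)
  isPWO_support' := x.isPWO_support'.mono (by
    intro n hn
    simp only [Function.mem_support, ne_eq] at hn ⊢
    exact fun h => hn (by rw [h, map_zero]))

/-- The derivation ∂, applied coefficientwise to a Laurent series in ξ⁻¹. -/
def dmap (d : Derivation ℂ NLSE NLSE) : NLSL → NLSL :=
  coeffMap ⟨fun x => d x, map_zero d⟩

/-- `∂` is the (unique) derivation of 𝒜[ε,ε⁻¹] with ∂(qᵢ)=qᵢ₊₁, ∂(rᵢ)=rᵢ₊₁, ∂(ε)=0. -/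
def IsDel (del : Derivation ℂ NLSE NLSE) : Prop :=
  (∀ i, del (qv i) = qv (i + 1)) ∧ (∀ i, del (rv i) = rv (i + 1)) ∧ del eps = 0

/-- The constant embedding 𝒜[ε,ε⁻¹] → 𝒜[ε,ε⁻¹][[ξ⁻¹]][ξ]. -/
def CL (x : NLSE) : NLSL := HahnSeries.C x

/-- The matrix U(ξ) = [[−ξ, −q],[r, ξ]]. -/
def Umat : Matrix (Fin 2) (Fin 2) NLSL :=
  !![-xiL, -(CL (qv 0)); CL (rv 0), xiL]

/-- The matrix [[2+a, b],[c, −a]]. -/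
def Rmat (a b c : NLSL) : Matrix (Fin 2) (Fin 2) NLSL := !![2 + a, b; c, -a]

/-- `a, b, c` are the entries of the (unique) basic matrix resolvent
R(ξ) = [[2+a(ξ), b(ξ)],[c(ξ), −a(ξ)]]. -/
def IsMR (del : Derivation ℂ NLSE NLSE) (a b c : NLSL) : Prop :=
  (∀ n : ℤ, n ≤ 0 → a.coeff n = 0) ∧
  (∀ n : ℤ, n ≤ 0 → b.coeff n = 0) ∧
  (∀ n : ℤ, n ≤ 0 → c.coeff n = 0) ∧
  (∀ n : ℤ, inAE (a.coeff n)) ∧ (∀ n : ℤ, inAE (b.coeff n)) ∧ (∀ n : ℤ, inAE (c.coeff n)) ∧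
  CL eps • (Rmat a b c).map (dmap del)
      + (Umat * Rmat a b c - Rmat a b c * Umat) = 0 ∧
  (Rmat a b c).det = 0

/-- A_j, the ξ^{−j−1}-coefficient of a(ξ). -/
def coA (a : NLSL) (j : ℕ) : NLSE := a.coeff (j + 1 : ℤ)

/-- The NLS derivations D_j: derivations of 𝒜[ε,ε⁻¹] commuting with ∂, annihilating ε,
with D_j(q) = 2^{j+1} ε⁻¹ B_{j+1} and D_j(r) = 2^{j+1} ε⁻¹ C_{j+1}. -/
def IsNLSD (del : Derivation ℂ NLSE NLSE) (b c : NLSL)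
    (D : ℕ → Derivation ℂ NLSE NLSE) : Prop :=
  (∀ j x, D j (del x) = del (D j x)) ∧
  (∀ j, D j eps = 0) ∧
  (∀ j, D j (qv 0) = (2 : NLSE) ^ (j + 1) * epsInv * coA b (j + 1)) ∧
  (∀ j, D j (rv 0) = (2 : NLSE) ^ (j + 1) * epsInv * coA c (j + 1))

end

noncomputable section

/-- The two-variable Laurent-series ring 𝒜[ε,ε⁻¹][[ξ⁻¹,ν⁻¹]][ξ,ν]; the outer
Hahn-series exponent records the power of ν⁻¹, the inner one the power of ξ⁻¹. -/
abbrev NLSL2 : Type := HahnSeries ℤ NLSL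

instance : CommRing NLSL2 := inferInstance
instance : Algebra ℂ NLSL2 := inferInstance

/-- Embedding of series in ξ (constant in ν). -/
def toXi (x : NLSL) : NLSL2 := HahnSeries.C x

/-- A series in ξ re-read as the corresponding series in ν. -/
def toNu (x : NLSL) : NLSL2 :=
  coeffMap ⟨fun e => (HahnSeries.C e : NLSL), map_zero _⟩ x

/-- ν. -/
def nuL : NLSL2 := HahnSeries.single (-1 : ℤ) 1

/-- ν⁻¹. -/
def nuInv : NLSL2 := HahnSeries.single (1 : ℤ) 1

/-- ξ, in the two-variable ring. -/
def xiL2 : NLSL2 := toXi xiL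

/-- ε, in the two-variable ring. -/
def epsL2 : NLSL2 := toXi (CL eps)

lemma dmap_zero (d : Derivation ℂ NLSE NLSE) : dmap d 0 = 0 := by
  ext n
  simp [dmap, coeffMap]

/-- ∂ applied to all 𝒜[ε,ε⁻¹]-coefficients of a two-variable series. -/
def dmap2 (d : Derivation ℂ NLSE NLSE) : NLSL2 → NLSL2 :=
  coeffMap ⟨dmap d, dmap_zero d⟩

/-- The loop operator ∇(ν) = Σ_{j≥0} 2^{−j} ν^{−j−2} D_j, applied to a series in ξ. -/
def nabla (D : ℕ → Derivation ℂ NLSE NLSE) (x : NLSL) : NLSL2 :=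
  HahnSeries.single (2 : ℤ) (1 : NLSL) *
    HahnSeries.ofPowerSeries ℤ NLSL
      (PowerSeries.mk fun j => ((2 : ℂ) ^ j)⁻¹ • dmap (D j) x)

end
noncomputable section

/-- U(ξ), in the two-variable ring. -/
def UXi : Matrix (Fin 2) (Fin 2) NLSL2 := Umat.map toXi

/-- ∇(ν)(U(ξ)) = [[0, −∇(ν)(q)],[∇(ν)(r), 0]]. -/
def nablaU (D : ℕ → Derivation ℂ NLSE NLSE) : Matrix (Fin 2) (Fin 2) NLSL2 :=
  !![0, -(nabla D (CL (qv 0))); nabla D (CL (rv 0)), 0]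

/-- R(ξ), in the two-variable ring. -/
def RXi' (a b c : NLSL) : Matrix (Fin 2) (Fin 2) NLSL2 := (Rmat a b c).map toXi

/-- Membership in ξ⁻¹ν⁻¹·𝒜[ε,ε⁻¹][[ξ⁻¹,ν⁻¹]]. -/
def memXiNu (w : NLSL2) : Prop :=
  (∀ m : ℤ, m ≤ 0 → w.coeff m = 0) ∧ (∀ m n : ℤ, n ≤ 0 → (w.coeff m).coeff n = 0)

/-- The two defining conditions of Lemma 2.1 for a trace-free matrix W(ξ,ν). -/
def WCond (del : Derivation ℂ NLSE NLSE) (D : ℕ → Derivation ℂ NLSE NLSE)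
    (a b c : NLSL) (W : Matrix (Fin 2) (Fin 2) NLSL2) : Prop :=
  (W 1 1 = -W 0 0) ∧
  (∀ i j : Fin 2, memXiNu (W i j)) ∧
  (epsL2 • W.map (dmap2 del) + (UXi * W - W * UXi)
      + (nablaU D * RXi' a b c - RXi' a b c * nablaU D) = 0) ∧
  (2 * W 0 0 + 2 * toXi a * W 0 0 + toXi c * W 0 1 + toXi b * W 1 0 = 0)

/-! Applying the derivation `∇(ν)` entrywise to the resolvent equations `ε∂R + [U, R] = 0` and
`det R = 0` yields both equations for `W = ∇(ν)R`, because `∇(ν)` commutes with `∂` and kills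
`ε`, `ξ` and the scalars.

For uniqueness, the difference of two solutions solves the homogeneous system
`ε∂V + [U, V] = 0`, `2X + 2aX + cY + bZ = 0`. Comparing coefficients of `ξ^{-n}`, the
off-diagonal entries of the first equation give `2Y_{n+1}` and `2Z_{n+1}` in terms of
`X_n, Y_n, Z_n`, and, since `a, b, c` start at `ξ⁻¹`, the scalar equation gives `2X_{n+1}` in
terms of lower coefficients; so every coefficient vanishes by induction on `n`. -/

lemma eq_zero_of_two_mul_eq_zero {u : NLSE} (h : 2 * u = 0) : u = 0 := by
  have h2 : (2 : NLSE) ≠ 0 := by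
    rw [← map_ofNat (algebraMap ℂ NLSE) 2]
    exact (map_ne_zero _).mpr two_ne_zero
  exact (mul_eq_zero.mp h).resolve_left h2

lemma Derivation.map_two {K R M : Type*} [CommSemiring K] [CommSemiring R] [AddCommMonoid M]
    [Algebra K R] [Module R M] [Module K M] (d : Derivation K R M) : d 2 = 0 := by
  rw [← Nat.cast_ofNat, d.map_natCast]

lemma HahnSeries.coeff_mul_eq_zero_of_le {R : Type*} [NonUnitalNonAssocSemiring R]
    {u v : HahnSeries ℤ R} {s t : ℤ}
    (hu : ∀ k ≤ s, u.coeff k = 0) (hv : ∀ k ≤ t, v.coeff k = 0)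
    {n : ℤ} (hn : n ≤ s + t + 1) : (u * v).coeff n = 0 := by
  rw [HahnSeries.coeff_mul]
  refine Finset.sum_eq_zero fun ij hij => ?_
  rw [Finset.mem_antidiagonal] at hij
  by_cases h : ij.1 ≤ s
  · rw [hu _ h, zero_mul]
  · rw [hv _ (by omega), mul_zero]

lemma xiL_mul_coeff (u : NLSL) (n : ℤ) : (xiL * u).coeff n = u.coeff (n + 1) := by
  rw [xiL]
  simpa using (HahnSeries.coeff_single_mul_add (r := (1 : NLSE)) (x := u) (a := n + 1) (b := -1))

lemma CL_mul_coeff (e : NLSE) (u : NLSL) (n : ℤ) : (CL e * u).coeff n = e * u.coeff n := by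
  rw [CL, HahnSeries.C_apply, HahnSeries.coeff_single_zero_mul]

-- `ℂ` acts on `NLSL` coefficientwise, not via `Algebra ℂ NLSL`, so `smul_mul_assoc` does not apply.
lemma smul_eq_CL_mul (r : ℂ) (x : NLSL) : r • x = CL (algebraMap ℂ NLSE r) * x := by
  rw [CL, HahnSeries.C_mul_eq_smul, algebraMap_smul]

lemma toXi_mul_coeff (u : NLSL) (w : NLSL2) (m : ℤ) : (toXi u * w).coeff m = u * w.coeff m := by
  rw [toXi, HahnSeries.C_apply, HahnSeries.coeff_single_zero_mul]

lemma mul_toXi_coeff (u : NLSL) (w : NLSL2) (m : ℤ) : (w * toXi u).coeff m = w.coeff m * u := by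
  rw [toXi, HahnSeries.C_apply, HahnSeries.coeff_mul_single_zero]

lemma HahnSeries.coeff_two_mul {Γ R : Type*} [AddCommMonoid Γ] [PartialOrder Γ]
    [IsOrderedCancelAddMonoid Γ] [Semiring R] (w : HahnSeries Γ R) (m : Γ) :
    ((2 : HahnSeries Γ R) * w).coeff m = 2 * w.coeff m := by
  rw [two_mul, HahnSeries.coeff_add, two_mul]

section CoefficientwiseDerivation

variable (d : Derivation ℂ NLSE NLSE)

lemma dmap_coeff (x : NLSL) (n : ℤ) : (dmap d x).coeff n = d (x.coeff n) := rfl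

lemma dmap2_coeff (x : NLSL2) (m : ℤ) : (dmap2 d x).coeff m = dmap d (x.coeff m) := rfl

lemma dmap_add (x y : NLSL) : dmap d (x + y) = dmap d x + dmap d y := by
  ext n : 2
  simp [dmap_coeff]

lemma dmap_sub (x y : NLSL) : dmap d (x - y) = dmap d x - dmap d y := by
  ext n : 2
  simp [dmap_coeff]

lemma dmap_smul (r : ℂ) (x : NLSL) : dmap d (r • x) = r • dmap d x := by
  ext n : 2
  simp [dmap_coeff]

lemma dmap_single (n : ℤ) (e : NLSE) :
    dmap d (HahnSeries.single n e) = HahnSeries.single n (d e) := by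
  ext k
  rw [dmap_coeff, HahnSeries.coeff_single, HahnSeries.coeff_single]
  split_ifs <;> simp

lemma support_dmap_subset (x : NLSL) : (dmap d x).support ⊆ x.support := fun k hk => by
  rw [HahnSeries.mem_support] at hk ⊢
  exact fun h => hk (by rw [dmap_coeff, h, map_zero])

lemma dmap_mul (x y : NLSL) : dmap d (x * y) = dmap d x * y + x * dmap d y := by
  ext n : 2
  rw [dmap_coeff, HahnSeries.coeff_mul, HahnSeries.coeff_add,
    HahnSeries.coeff_mul_left' x.isPWO_support (support_dmap_subset d x),
    HahnSeries.coeff_mul_right' y.isPWO_support (support_dmap_subset d y), map_sum,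
    ← Finset.sum_add_distrib]
  refine Finset.sum_congr rfl fun ij _ => ?_
  rw [Derivation.leibniz, dmap_coeff, dmap_coeff, smul_eq_mul, smul_eq_mul]
  ring

lemma dmap2_sub (x y : NLSL2) : dmap2 d (x - y) = dmap2 d x - dmap2 d y := by
  refine HahnSeries.ext (funext fun m => ?_)
  simp only [dmap2_coeff, HahnSeries.coeff_sub, dmap_sub]

end CoefficientwiseDerivation

section LoopOperator

variable (D : ℕ → Derivation ℂ NLSE NLSE)

lemma nabla_coeff_add_two (x : NLSL) (j : ℕ) :
    (nabla D x).coeff (j + 2) = ((2 : ℂ) ^ j)⁻¹ • dmap (D j) x := by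
  rw [nabla, HahnSeries.coeff_single_mul_add, one_mul, HahnSeries.ofPowerSeries_apply_coeff,
    PowerSeries.coeff_mk]

lemma nabla_coeff_of_lt_two (x : NLSL) {m : ℤ} (hm : m < 2) : (nabla D x).coeff m = 0 := by
  rw [nabla, ← sub_add_cancel m 2, HahnSeries.coeff_single_mul_add, one_mul,
    HahnSeries.ofPowerSeries_apply]
  refine HahnSeries.embDomain_of_notMem_range fun ⟨k, hk⟩ => ?_
  have : (k : ℤ) = m - 2 := hk
  omega

lemma nabla_ext {x : NLSL} {w : NLSL2}
    (hlow : ∀ m < 2, w.coeff m = 0)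
    (h : ∀ j : ℕ, ((2 : ℂ) ^ j)⁻¹ • dmap (D j) x = w.coeff (j + 2)) : nabla D x = w := by
  refine HahnSeries.ext (funext fun m => ?_)
  by_cases hm : m < 2
  · rw [nabla_coeff_of_lt_two D x hm, hlow m hm]
  · rw [show m = ((m - 2).toNat : ℤ) + 2 by omega, nabla_coeff_add_two]
    exact h _

lemma nabla_add (x y : NLSL) : nabla D (x + y) = nabla D x + nabla D y := by
  simp only [nabla, ← mul_add, ← map_add]
  congr 2
  ext j
  simp [dmap_add]

lemma nabla_zero : nabla D 0 = 0 := by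
  simpa using nabla_add D 0 0

lemma nabla_neg (x : NLSL) : nabla D (-x) = -nabla D x :=
  eq_neg_of_add_eq_zero_left (by rw [← nabla_add, neg_add_cancel, nabla_zero])

lemma nabla_sub (x y : NLSL) : nabla D (x - y) = nabla D x - nabla D y := by
  rw [sub_eq_add_neg, nabla_add, nabla_neg, sub_eq_add_neg]

lemma nabla_mul (x y : NLSL) :
    nabla D (x * y) = nabla D x * toXi y + toXi x * nabla D y := by
  have leibniz : (PowerSeries.mk fun j => ((2 : ℂ) ^ j)⁻¹ • dmap (D j) (x * y)) =
      (PowerSeries.mk fun j => ((2 : ℂ) ^ j)⁻¹ • dmap (D j) x) * PowerSeries.C y +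
        PowerSeries.C x * PowerSeries.mk fun j => ((2 : ℂ) ^ j)⁻¹ • dmap (D j) y := by
    refine PowerSeries.ext fun j => ?_
    simp only [PowerSeries.coeff_mk, map_add, PowerSeries.coeff_mul_C, PowerSeries.coeff_C_mul,
      dmap_mul, smul_eq_CL_mul]
    ring
  simp only [nabla, toXi, leibniz, map_add, map_mul, HahnSeries.ofPowerSeries_C]
  ring

lemma nabla_single_eq_zero {e : NLSE} (he : ∀ j, D j e = 0) (n : ℤ) :
    nabla D (HahnSeries.single n e) = 0 :=
  nabla_ext D (fun _ _ => rfl) fun j => by simp [dmap_single, he]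

lemma nabla_two : nabla D 2 = 0 := by
  rw [show (2 : NLSL) = HahnSeries.single 0 2 from HahnSeries.coeff_inj.mp rfl]
  exact nabla_single_eq_zero D (fun j => (D j).map_two) 0

lemma nabla_xiL : nabla D xiL = 0 :=
  nabla_single_eq_zero D (fun j => (D j).map_one_eq_zero) (-1)

lemma nabla_dmap {del : Derivation ℂ NLSE NLSE} (hcomm : ∀ j x, D j (del x) = del (D j x))
    (x : NLSL) : nabla D (dmap del x) = dmap2 del (nabla D x) := by
  refine nabla_ext D (fun m hm => ?_) (fun j => ?_)
  · rw [dmap2_coeff, nabla_coeff_of_lt_two D x hm, dmap_zero]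
  · rw [dmap2_coeff, nabla_coeff_add_two, dmap_smul]
    congr 1
    ext n
    simp only [dmap_coeff, hcomm]

lemma memXiNu_nabla {x : NLSL} (hx : ∀ n ≤ 0, x.coeff n = 0) : memXiNu (nabla D x) := by
  refine ⟨fun m hm => nabla_coeff_of_lt_two D x (by omega), fun m n hn => ?_⟩
  by_cases hm : m < 2
  · rw [nabla_coeff_of_lt_two D x hm, HahnSeries.coeff_zero]
  · rw [show m = ((m - 2).toNat : ℤ) + 2 by omega, nabla_coeff_add_two,
      HahnSeries.coeff_smul, dmap_coeff, hx n hn, map_zero, smul_zero]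

lemma map_nabla_mul (A B : Matrix (Fin 2) (Fin 2) NLSL) :
    (A * B).map (nabla D) = A.map (nabla D) * B.map toXi + A.map toXi * B.map (nabla D) := by
  refine Matrix.ext fun i l => ?_
  simp only [Matrix.map_apply, Matrix.mul_apply, Matrix.add_apply, Fin.sum_univ_two,
    nabla_add, nabla_mul]
  ring

lemma map_nabla_Umat : Umat.map (nabla D) = nablaU D := by
  refine Matrix.ext fun i l => ?_
  fin_cases i <;> fin_cases l <;> simp [Umat, nablaU, nabla_neg, nabla_xiL]

lemma map_nabla_CL_smul {e : NLSE} (he : ∀ j, D j e = 0) (Z : Matrix (Fin 2) (Fin 2) NLSL) :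
    (CL e • Z).map (nabla D) = toXi (CL e) • Z.map (nabla D) := by
  refine Matrix.ext fun i l => ?_
  simp only [Matrix.map_apply, Matrix.smul_apply, smul_eq_mul, nabla_mul, CL, HahnSeries.C_apply,
    nabla_single_eq_zero D he, zero_mul, zero_add]

lemma map_nabla_map_dmap {del : Derivation ℂ NLSE NLSE}
    (hcomm : ∀ j x, D j (del x) = del (D j x)) (Z : Matrix (Fin 2) (Fin 2) NLSL) :
    (Z.map (dmap del)).map (nabla D) = (Z.map (nabla D)).map (dmap2 del) := by
  simp only [Matrix.map_map, Function.comp_def, nabla_dmap D hcomm]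

lemma nabla_lax_equation {del : Derivation ℂ NLSE NLSE}
    (hcomm : ∀ j x, D j (del x) = del (D j x)) (heps : ∀ j, D j eps = 0)
    {R : Matrix (Fin 2) (Fin 2) NLSL}
    (hR : CL eps • R.map (dmap del) + (Umat * R - R * Umat) = 0) :
    epsL2 • (R.map (nabla D)).map (dmap2 del) + (UXi * R.map (nabla D) - R.map (nabla D) * UXi)
      + (nablaU D * R.map toXi - R.map toXi * nablaU D) = 0 := by
  have h := congrArg (Matrix.map · (nabla D)) hR
  simp only [Matrix.map_add _ (nabla_add D), Matrix.map_sub _ (nabla_sub D), map_nabla_mul,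
    map_nabla_CL_smul D heps, map_nabla_map_dmap D hcomm, map_nabla_Umat,
    Matrix.map_zero _ (nabla_zero D)] at h
  rw [← h, UXi, epsL2]
  abel

lemma nabla_det_Rmat {a b c : NLSL} (hdet : (Rmat a b c).det = 0) :
    2 * nabla D a + 2 * toXi a * nabla D a + toXi c * nabla D b + toXi b * nabla D c = 0 := by
  have h := congrArg (nabla D) hdet
  rw [Rmat, Matrix.det_fin_two_of, nabla_sub, nabla_mul, nabla_mul, nabla_zero, nabla_neg,
    nabla_add, nabla_two, zero_add] at h
  simp only [toXi, map_neg, map_add, map_ofNat] at h ⊢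
  linear_combination -h

lemma nabla_Rmat (a b c : NLSL) :
    (Rmat a b c).map (nabla D) =
      !![nabla D a, nabla D b; nabla D c, -nabla D a] := by
  refine Matrix.ext fun i l => ?_
  fin_cases i <;> fin_cases l <;> simp [Rmat, nabla_add, nabla_two, nabla_neg]

end LoopOperator

lemma wCond_nabla_Rmat {del : Derivation ℂ NLSE NLSE} {a b c : NLSL} (hR : IsMR del a b c)
    {D : ℕ → Derivation ℂ NLSE NLSE} (hcomm : ∀ j x, D j (del x) = del (D j x))
    (heps : ∀ j, D j eps = 0) :
    WCond del D a b c (Matrix.of fun i l => nabla D (Rmat a b c i l)) := by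
  obtain ⟨ha, hb, hc, -, -, -, hlax, hdet⟩ := hR
  have hlax' := nabla_lax_equation D hcomm heps hlax
  have hna : ∀ n ≤ 0, (-a).coeff n = 0 := fun n hn => by simp [ha n hn]
  change WCond del D a b c ((Rmat a b c).map (nabla D))
  rw [nabla_Rmat] at hlax' ⊢
  refine ⟨rfl, fun i l => ?_, hlax', nabla_det_Rmat D hdet⟩
  fin_cases i <;> fin_cases l
  exacts [memXiNu_nabla D ha, memXiNu_nabla D hb, memXiNu_nabla D hc,
    nabla_neg D a ▸ memXiNu_nabla D hna]

lemma eq_zero_of_triangular_recursion {a b c x y z : NLSL}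
    (ha : ∀ n ≤ 0, a.coeff n = 0) (hb : ∀ n ≤ 0, b.coeff n = 0) (hc : ∀ n ≤ 0, c.coeff n = 0)
    (hx : ∀ n ≤ 0, x.coeff n = 0) (hy : ∀ n ≤ 0, y.coeff n = 0) (hz : ∀ n ≤ 0, z.coeff n = 0)
    (hY : ∀ n, x.coeff n = 0 → y.coeff n = 0 → y.coeff (n + 1) = 0)
    (hZ : ∀ n, x.coeff n = 0 → z.coeff n = 0 → z.coeff (n + 1) = 0)
    (hX : 2 * x + 2 * a * x + c * y + b * z = 0) :
    x = 0 ∧ y = 0 ∧ z = 0 := by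
  have step : ∀ N : ℤ, (∀ k ≤ N, x.coeff k = 0 ∧ y.coeff k = 0 ∧ z.coeff k = 0) →
      ∀ k ≤ N + 1, x.coeff k = 0 ∧ y.coeff k = 0 ∧ z.coeff k = 0 := by
    intro N ih k hk
    obtain hk | rfl := hk.lt_or_eq
    · exact ih k (by omega)
    obtain ⟨hxN, hyN, hzN⟩ := ih N le_rfl
    have hle : N + 1 ≤ 0 + N + 1 := by omega
    have e := congrArg (HahnSeries.coeff · (N + 1)) hX
    simp only [HahnSeries.coeff_add, mul_assoc, HahnSeries.coeff_two_mul, HahnSeries.coeff_zero,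
      HahnSeries.coeff_mul_eq_zero_of_le ha (fun k hk => (ih k hk).1) hle,
      HahnSeries.coeff_mul_eq_zero_of_le hc (fun k hk => (ih k hk).2.1) hle,
      HahnSeries.coeff_mul_eq_zero_of_le hb (fun k hk => (ih k hk).2.2) hle,
      mul_zero, add_zero] at e
    exact ⟨eq_zero_of_two_mul_eq_zero e, hY N hxN hyN, hZ N hxN hzN⟩
  have vanish : ∀ N, 0 ≤ N → ∀ k ≤ N, x.coeff k = 0 ∧ y.coeff k = 0 ∧ z.coeff k = 0 :=
    Int.leInduction (fun k hk => ⟨hx k hk, hy k hk, hz k hk⟩) fun N _ => step N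
  have hall (k : ℤ) := vanish (max k 0) (le_max_right k 0) k (le_max_left k 0)
  exact ⟨HahnSeries.ext (funext fun k => (hall k).1), HahnSeries.ext (funext fun k => (hall k).2.1),
    HahnSeries.ext (funext fun k => (hall k).2.2)⟩

lemma lax_apply_zero_one (del : Derivation ℂ NLSE NLSE) (e : NLSE)
    {V : Matrix (Fin 2) (Fin 2) NLSL} (htr : V 1 1 = -V 0 0) :
    (CL e • V.map (dmap del) + (Umat * V - V * Umat)) 0 1 =
      CL e * dmap del (V 0 1) - 2 * (xiL * V 0 1) + 2 * (CL (qv 0) * V 0 0) := by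
  simp only [Matrix.add_apply, Matrix.sub_apply, Matrix.smul_apply, Matrix.map_apply,
    Matrix.mul_apply, Fin.sum_univ_two, Umat, Matrix.of_apply, Matrix.cons_val',
    Matrix.cons_val_zero, Matrix.cons_val_one, Matrix.cons_val_fin_one, smul_eq_mul, htr]
  ring

lemma lax_apply_one_zero (del : Derivation ℂ NLSE NLSE) (e : NLSE)
    {V : Matrix (Fin 2) (Fin 2) NLSL} (htr : V 1 1 = -V 0 0) :
    (CL e • V.map (dmap del) + (Umat * V - V * Umat)) 1 0 =
      CL e * dmap del (V 1 0) + 2 * (xiL * V 1 0) + 2 * (CL (rv 0) * V 0 0) := by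
  simp only [Matrix.add_apply, Matrix.sub_apply, Matrix.smul_apply, Matrix.map_apply,
    Matrix.mul_apply, Fin.sum_univ_two, Umat, Matrix.of_apply, Matrix.cons_val',
    Matrix.cons_val_zero, Matrix.cons_val_one, Matrix.cons_val_fin_one, smul_eq_mul, htr]
  ring

lemma eq_zero_of_linearized_resolvent {del : Derivation ℂ NLSE NLSE} {a b c : NLSL}
    (ha : ∀ n ≤ 0, a.coeff n = 0) (hb : ∀ n ≤ 0, b.coeff n = 0) (hc : ∀ n ≤ 0, c.coeff n = 0)
    {V : Matrix (Fin 2) (Fin 2) NLSL} (htr : V 1 1 = -V 0 0)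
    (hV : ∀ i j, ∀ n ≤ 0, (V i j).coeff n = 0)
    (hlax : CL eps • V.map (dmap del) + (Umat * V - V * Umat) = 0)
    (hdet : 2 * V 0 0 + 2 * a * V 0 0 + c * V 0 1 + b * V 1 0 = 0) :
    V = 0 := by
  have hY (n : ℤ) (hx : (V 0 0).coeff n = 0) (hy : (V 0 1).coeff n = 0) :
      (V 0 1).coeff (n + 1) = 0 := by
    have e := congrArg (fun M => (M 0 1).coeff n) hlax
    simp only [lax_apply_zero_one del eps htr, HahnSeries.coeff_add, HahnSeries.coeff_sub,
      HahnSeries.coeff_two_mul, CL_mul_coeff, xiL_mul_coeff, dmap_coeff, hx, hy, map_zero,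
      mul_zero, Matrix.zero_apply, HahnSeries.coeff_zero, add_zero, zero_sub, neg_eq_zero] at e
    exact eq_zero_of_two_mul_eq_zero e
  have hZ (n : ℤ) (hx : (V 0 0).coeff n = 0) (hz : (V 1 0).coeff n = 0) :
      (V 1 0).coeff (n + 1) = 0 := by
    have e := congrArg (fun M => (M 1 0).coeff n) hlax
    simp only [lax_apply_one_zero del eps htr, HahnSeries.coeff_add,
      HahnSeries.coeff_two_mul, CL_mul_coeff, xiL_mul_coeff, dmap_coeff, hx, hz, map_zero,
      mul_zero, Matrix.zero_apply, HahnSeries.coeff_zero, add_zero, zero_add] at e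
    exact eq_zero_of_two_mul_eq_zero e
  obtain ⟨h00, h01, h10⟩ :=
    eq_zero_of_triangular_recursion ha hb hc (hV 0 0) (hV 0 1) (hV 1 0) hY hZ hdet
  refine Matrix.ext fun i j => ?_
  fin_cases i <;> fin_cases j <;> simp [h00, h01, h10, htr]

lemma map_coeff_lax (del : Derivation ℂ NLSE NLSE) (V : Matrix (Fin 2) (Fin 2) NLSL2) (m : ℤ) :
    (epsL2 • V.map (dmap2 del) + (UXi * V - V * UXi)).map (HahnSeries.coeff · m) =
      CL eps • (V.map (HahnSeries.coeff · m)).map (dmap del) +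
        (Umat * V.map (HahnSeries.coeff · m) - V.map (HahnSeries.coeff · m) * Umat) := by
  refine Matrix.ext fun i j => ?_
  simp only [Matrix.map_apply, Matrix.add_apply, Matrix.sub_apply, Matrix.smul_apply,
    Matrix.mul_apply, Fin.sum_univ_two, smul_eq_mul, HahnSeries.coeff_add, HahnSeries.coeff_sub,
    epsL2, UXi, toXi_mul_coeff, mul_toXi_coeff, dmap2_coeff]

lemma eq_zero_of_linearized_resolvent₂ {del : Derivation ℂ NLSE NLSE} {a b c : NLSL}
    (ha : ∀ n ≤ 0, a.coeff n = 0) (hb : ∀ n ≤ 0, b.coeff n = 0) (hc : ∀ n ≤ 0, c.coeff n = 0)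
    {V : Matrix (Fin 2) (Fin 2) NLSL2} (htr : V 1 1 = -V 0 0) (hV : ∀ i j, memXiNu (V i j))
    (hlax : epsL2 • V.map (dmap2 del) + (UXi * V - V * UXi) = 0)
    (hdet : 2 * V 0 0 + 2 * toXi a * V 0 0 + toXi c * V 0 1 + toXi b * V 1 0 = 0) :
    V = 0 := by
  have hcoeff (m : ℤ) : V.map (HahnSeries.coeff · m) = 0 := by
    refine eq_zero_of_linearized_resolvent (del := del) ha hb hc (by simp [htr])
      (fun i j => (hV i j).2 m) ?_ ?_
    · rw [← map_coeff_lax, hlax]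
      exact Matrix.map_zero _ rfl
    · have e := congrArg (HahnSeries.coeff · m) hdet
      simpa only [Matrix.map_apply, HahnSeries.coeff_add, mul_assoc, HahnSeries.coeff_two_mul,
        toXi_mul_coeff, HahnSeries.coeff_zero] using e
  exact Matrix.ext fun i j => HahnSeries.ext (funext fun m => congrFun (congrFun (hcoeff m) i) j)

lemma memXiNu_sub {x y : NLSL2} (hx : memXiNu x) (hy : memXiNu y) : memXiNu (x - y) :=
  ⟨fun m hm => by simp [hx.1 m hm, hy.1 m hm], fun m n hn => by simp [hx.2 m n hn, hy.2 m n hn]⟩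

lemma eq_of_wCond {del : Derivation ℂ NLSE NLSE} {a b c : NLSL} (hR : IsMR del a b c)
    {D : ℕ → Derivation ℂ NLSE NLSE} {W W' : Matrix (Fin 2) (Fin 2) NLSL2}
    (hW : WCond del D a b c W) (hW' : WCond del D a b c W') : W = W' := by
  obtain ⟨ha, hb, hc, -⟩ := hR
  obtain ⟨htr, hmem, hlax, hdet⟩ := hW
  obtain ⟨htr', hmem', hlax', hdet'⟩ := hW'
  refine sub_eq_zero.mp (eq_zero_of_linearized_resolvent₂ ha hb hc (del := del) ?_
    (fun i j => memXiNu_sub (hmem i j) (hmem' i j)) ?_ ?_)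
  · simp [htr, htr']
    ring
  · rw [Matrix.map_sub _ (dmap2_sub del), smul_sub, mul_sub, sub_mul,
      ← sub_eq_zero_of_eq (hlax.trans hlax'.symm)]
    abel
  · simp only [Matrix.sub_apply]
    linear_combination hdet - hdet'

theorem nls_W_exists_unique_eq_nabla_R_general
    (del : Derivation ℂ NLSE NLSE)
    (a b c : NLSL) (hR : IsMR del a b c)
    (D : ℕ → Derivation ℂ NLSE NLSE) (hD : IsNLSD del b c D) :
    (∃! W : Matrix (Fin 2) (Fin 2) NLSL2, WCond del D a b c W) ∧
    (∀ W : Matrix (Fin 2) (Fin 2) NLSL2, WCond del D a b c W →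
      W = Matrix.of fun i l => nabla D (Rmat a b c i l)) := by
  obtain ⟨hcomm, heps, -, -⟩ := hD
  have hW₀ := wCond_nabla_Rmat hR hcomm heps
  exact ⟨⟨_, hW₀, fun W hW => eq_of_wCond hR hW hW₀⟩, fun W hW => eq_of_wCond hR hW hW₀⟩

/-- Lemma 2.1: existence and uniqueness of W(ξ,ν), and W = ∇(ν)(R(ξ)). -/
theorem nls_W_exists_unique_eq_nabla_R
    (del : Derivation ℂ NLSE NLSE) (hdel : IsDel del)
    (a b c : NLSL) (hR : IsMR del a b c)
    (D : ℕ → Derivation ℂ NLSE NLSE) (hD : IsNLSD del b c D) :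
    (∃! W : Matrix (Fin 2) (Fin 2) NLSL2, WCond del D a b c W) ∧
    (∀ W : Matrix (Fin 2) (Fin 2) NLSL2, WCond del D a b c W →
      W = Matrix.of fun i l => nabla D (Rmat a b c i l)) :=
  nls_W_exists_unique_eq_nabla_R_general del a b c hR D hD
end
end

section
/- The element tr(R(ξ)R(ν)) − 4 of 𝒜[ε][[ξ⁻¹,ν⁻¹]] is divisible by (ξ−ν)², and the quotient (tr(R(ξ)R(ν)) − 4)/(ξ−ν)² lies in ξ⁻²ν⁻²·𝒜[ε][[ξ⁻¹,ν⁻¹]]. -/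
/-!
Since `R(ξ)` has trace 2 and determinant 0, its entries satisfy `a² + 2a + bc = 0`, at `ξ` as well
as at `ν`. Subtracting both relations turns `tr(R(ξ)R(ν)) - 4` into
`-(a(ξ) - a(ν))² - (b(ξ) - b(ν))(c(ξ) - c(ν))`. Each difference is `(ξ - ν)` times the divided
difference, whose coefficients are, up to sign, coefficients of the series themselves and which
lies in `ξ⁻¹ν⁻¹𝒜[ε][[ξ⁻¹, ν⁻¹]]`; the product of two of them lies in `ξ⁻²ν⁻²𝒜[ε][[ξ⁻¹, ν⁻¹]]`.
-/

set_option synthInstance.maxHeartbeats 1000000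
set_option maxHeartbeats 1000000

noncomputable section

/-- R(ν), in the two-variable ring. -/
def RNu' (a b c : NLSL) : Matrix (Fin 2) (Fin 2) NLSL2 :=
  !![2 + toNu a, toNu b; toNu c, -toNu a]

namespace LaurentPolynomial

variable (R : Type*) [Ring R]

def nonnegSubring : Subring R[T;T⁻¹] where
  carrier := {x | ∀ n : ℤ, n < 0 → AddMonoidAlgebra.coeff x n = 0}
  zero_mem' _ _ := rfl
  one_mem' n hn := by
    rw [← T_zero, T, AddMonoidAlgebra.coeff_single, Finsupp.single_eq_of_ne (by omega)]
  add_mem' {x y} hx hy n hn := by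
    rw [AddMonoidAlgebra.coeff_add, Finsupp.add_apply, hx n hn, hy n hn, add_zero]
  neg_mem' {x} hx n hn := by
    rw [AddMonoidAlgebra.coeff_neg, Finsupp.neg_apply, hx n hn, neg_zero]
  mul_mem' {x y} hx hy n hn := by
    classical
    by_contra hxy
    obtain ⟨i, hi, j, hj, rfl⟩ := Finset.mem_add.mp
      (AddMonoidAlgebra.support_coeff_mul_subset x y (Finsupp.mem_support_iff.mpr hxy))
    rw [Finsupp.mem_support_iff] at hi hj
    rcases lt_or_ge i 0 with hi' | hi'
    · exact hi (hx i hi')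
    · exact hj (hy j (by omega))

end LaurentPolynomial

namespace HahnSeries

section mapRingHom

variable {Γ R S : Type*} [AddCommMonoid Γ] [PartialOrder Γ] [IsOrderedCancelAddMonoid Γ]
  [Semiring R] [Semiring S]

def mapRingHom (f : R →+* S) : HahnSeries Γ R →+* HahnSeries Γ S where
  toFun x := x.map f
  map_one' := HahnSeries.map_one f.toMonoidWithZeroHom
  map_mul' _ _ := HahnSeries.map_mul (f : R →ₙ+* S)
  map_zero' := by ext; simp
  map_add' _ _ := HahnSeries.map_add (f : R →+ S)

end mapRingHom

variable {R : Type*} [Ring R]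

lemma coeff_single_neg_one_mul (x : HahnSeries ℤ R) (n : ℤ) :
    (single (-1) 1 * x).coeff n = x.coeff (n + 1) := by
  simpa using coeff_single_mul_add (r := (1 : R)) (x := x) (a := n + 1) (b := -1)

lemma coeff_coeff_mul (x y : HahnSeries ℤ (HahnSeries ℤ R)) (m n : ℤ) :
    ((x * y).coeff m).coeff n =
      ∑ ij ∈ Finset.antidiagonal x.isPWO_support y.isPWO_support m,
        ∑ pq ∈ Finset.antidiagonal (x.coeff ij.1).isPWO_support (y.coeff ij.2).isPWO_support n,
          (x.coeff ij.1).coeff pq.1 * (y.coeff ij.2).coeff pq.2 := by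
  simp only [coeff_mul, coeff_sum]

lemma coeff_coeff_mul_eq_zero {x y : HahnSeries ℤ (HahnSeries ℤ R)} {k l k' l' : ℤ}
    (hx : ∀ m n, m < k ∨ n < l → (x.coeff m).coeff n = 0)
    (hy : ∀ m n, m < k' ∨ n < l' → (y.coeff m).coeff n = 0)
    {m n : ℤ} (h : m < k + k' ∨ n < l + l') : ((x * y).coeff m).coeff n = 0 := by
  rw [coeff_coeff_mul]
  refine Finset.sum_eq_zero fun ij hij => Finset.sum_eq_zero fun pq hpq => ?_
  rw [Finset.mem_antidiagonal] at hij hpq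
  by_cases hxz : ij.1 < k ∨ pq.1 < l
  · rw [hx _ _ hxz, zero_mul]
  · rw [hy _ _ (by omega), mul_zero]

lemma coeff_coeff_mul_mem (A : Subring R) {x y : HahnSeries ℤ (HahnSeries ℤ R)}
    (hx : ∀ m n, (x.coeff m).coeff n ∈ A) (hy : ∀ m n, (y.coeff m).coeff n ∈ A) (m n : ℤ) :
    ((x * y).coeff m).coeff n ∈ A := by
  rw [coeff_coeff_mul]
  exact A.sum_mem fun _ _ => A.sum_mem fun _ _ => A.mul_mem (hx _ _) (hy _ _)

/-- With `ξ = C (single (-1) 1)` and `ν = single (-1) 1`, this is `(x(ξ) - x(ν)) / (ξ - ν)`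
when `x` has no terms `ξ⁻ᵏ` with `k ≤ 0`: the formula comes from
`ξ⁻ᵏ - ν⁻ᵏ = -(ξ - ν) ∑_{i + j = k + 1, i, j ≥ 1} ξ⁻ⁱ ν⁻ʲ`. -/
def divDiff (x : HahnSeries ℤ R) : HahnSeries ℤ (HahnSeries ℤ R) :=
  ofSuppBddBelow
    (fun m => ofSuppBddBelow (fun n => if 1 ≤ m ∧ 1 ≤ n then -x.coeff (m + n - 1) else 0)
      ⟨1, fun n hn => by by_contra h; exact hn (if_neg (by omega))⟩)
    ⟨1, fun m hm => by
      by_contra h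
      exact hm (by ext n; exact if_neg (by omega))⟩

lemma divDiff_coeff_coeff (x : HahnSeries ℤ R) (m n : ℤ) :
    ((divDiff x).coeff m).coeff n = if 1 ≤ m ∧ 1 ≤ n then -x.coeff (m + n - 1) else 0 :=
  rfl

lemma divDiff_coeff_coeff_eq_zero (x : HahnSeries ℤ R) {m n : ℤ} (h : m < 1 ∨ n < 1) :
    ((divDiff x).coeff m).coeff n = 0 :=
  if_neg (by omega)

lemma divDiff_coeff_coeff_mem (A : Subring R) {x : HahnSeries ℤ R} (hx : ∀ n, x.coeff n ∈ A)
    (m n : ℤ) : ((divDiff x).coeff m).coeff n ∈ A := by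
  rw [divDiff_coeff_coeff]
  split_ifs
  exacts [A.neg_mem (hx _), A.zero_mem]

lemma mul_divDiff {x : HahnSeries ℤ R} (hx : ∀ n ≤ 0, x.coeff n = 0) :
    (C (single (-1) 1) - single (-1) 1) * divDiff x = C x - x.map C := by
  ext m n
  simp only [sub_mul, coeff_sub, C_apply, coeff_single_zero_mul, coeff_single_neg_one_mul,
    divDiff_coeff_coeff, coeff_single, map_coeff]
  rw [show m + (n + 1) - 1 = m + n by ring, show m + 1 + n - 1 = m + n by ring]
  split_ifs <;> grind [coeff_zero]

end HahnSeries

open HahnSeries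

lemma inAE_iff_mem_nonnegSubring (x : NLSE) :
    inAE x ↔ x ∈ LaurentPolynomial.nonnegSubring NLSA :=
  Iff.rfl

lemma xiL2_sub_nuL_mul_divDiff {x : NLSL} (hx : ∀ n ≤ 0, x.coeff n = 0) :
    (xiL2 - nuL) * divDiff x = toXi x - toNu x :=
  mul_divDiff hx

lemma det_Rmat (a b c : NLSL) : (Rmat a b c).det = -(a * a + 2 * a + b * c) := by
  rw [Rmat, Matrix.det_fin_two_of]
  ring

lemma trace_RXi'_mul_RNu'_sub_four {a b c : NLSL} (h : a * a + 2 * a + b * c = 0) :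
    (RXi' a b c * RNu' a b c).trace - 4 =
      -(toXi a - toNu a) ^ 2 - (toXi b - toNu b) * (toXi c - toNu c) := by
  have hXi : C a * C a + 2 * C a + C b * C c = (0 : NLSL2) := by
    have := congrArg (C : NLSL →+* NLSL2) h
    simp only [map_add, map_mul, map_ofNat, map_zero] at this
    exact this
  have hNu : toNu a * toNu a + 2 * toNu a + toNu b * toNu c = 0 := by
    have := congrArg (mapRingHom (C : NLSE →+* NLSL)) h
    simp only [map_add, map_mul, map_ofNat, map_zero] at this
    exact this
  simp only [RXi', RNu', Rmat, Matrix.trace_fin_two, Matrix.mul_apply, Fin.sum_univ_two,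
    Matrix.map_apply, Matrix.of_apply, Matrix.cons_val', Matrix.cons_val_zero, Matrix.cons_val_one,
    Matrix.empty_val', Matrix.cons_val_fin_one, toXi, map_add, map_neg, map_ofNat]
  linear_combination hXi + hNu

theorem nls_trace_divisible_general
    (del : Derivation ℂ NLSE NLSE)
    (a b c : NLSL) (hR : IsMR del a b c) :
    ∃ S : NLSL2,
      (xiL2 - nuL) ^ 2 * S = (RXi' a b c * RNu' a b c).trace - 4 ∧
      (∀ m n : ℤ, m < 2 ∨ n < 2 → (S.coeff m).coeff n = 0) ∧
      (∀ m n : ℤ, inAE ((S.coeff m).coeff n)) := by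
  obtain ⟨ha, hb, hc, haE, hbE, hcE, -, hdet⟩ := hR
  have hquad : a * a + 2 * a + b * c = 0 := by rwa [det_Rmat, neg_eq_zero] at hdet
  refine ⟨-(divDiff a * divDiff a) - divDiff b * divDiff c, ?_, fun m n h => ?_, fun m n => ?_⟩
  · rw [trace_RXi'_mul_RNu'_sub_four hquad, ← xiL2_sub_nuL_mul_divDiff ha,
      ← xiL2_sub_nuL_mul_divDiff hb, ← xiL2_sub_nuL_mul_divDiff hc]
    ring
  · have hvanish (x y : NLSL) : ((divDiff x * divDiff y).coeff m).coeff n = 0 :=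
      coeff_coeff_mul_eq_zero (fun _ _ => divDiff_coeff_coeff_eq_zero x)
        (fun _ _ => divDiff_coeff_coeff_eq_zero y) (by omega)
    simp only [coeff_sub, coeff_neg, hvanish, neg_zero, sub_zero]
  · have hmem {x y : NLSL} (hx : ∀ n, inAE (x.coeff n)) (hy : ∀ n, inAE (y.coeff n)) :
        ((divDiff x * divDiff y).coeff m).coeff n ∈ LaurentPolynomial.nonnegSubring NLSA :=
      coeff_coeff_mul_mem _ (divDiff_coeff_coeff_mem _ hx) (divDiff_coeff_coeff_mem _ hy) m n
    simp only [coeff_sub, coeff_neg, inAE_iff_mem_nonnegSubring]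
    exact sub_mem (neg_mem (hmem haE haE)) (hmem hbE hcE)

/-- tr(R(ξ)R(ν)) − 4 is divisible by (ξ−ν)², with quotient in
ξ⁻²ν⁻²·𝒜[ε][[ξ⁻¹,ν⁻¹]]. -/
theorem nls_trace_divisible
    (del : Derivation ℂ NLSE NLSE) (hdel : IsDel del)
    (a b c : NLSL) (hR : IsMR del a b c) :
    ∃ S : NLSL2,
      (xiL2 - nuL) ^ 2 * S = (RXi' a b c * RNu' a b c).trace - 4 ∧
      (∀ m n : ℤ, m < 2 ∨ n < 2 → (S.coeff m).coeff n = 0) ∧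
      (∀ m n : ℤ, inAE ((S.coeff m).coeff n)) :=
  nls_trace_divisible_general del a b c hR

end
end
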